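/- Let g_1, …, g_m : ℝ^n → ℝ^d each be differentiable with L_g-Lipschitz Jacobian and with Jacobian operator norm bounded by M everywhere. Then the gradient of r_ε(x) = Σ_{j=1}^m (√(‖g_j(x)‖² + ε²) − ε) is Lipschitz continuous with constant m(L_g + 2M²/ε). -/

import Mathlib

/-!
The gradient of `√(‖v‖² + ε²)` is `u_ε(v) = v / √(‖v‖² + ε²)`, so by the chain rule the
derivative of the `j`-th summand at `x` is `⟪u_ε(g_j x), Dg_j(x) ·⟫`. Since `√(‖v‖² + ε²)` is the
Euclidean norm of `(v, ε)`, it is `1`-Lipschitz in `v` and at least `max ‖v‖ ε`; hence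
`‖u_ε‖ ≤ 1` and `u_ε` is `2/ε`-Lipschitz. Splitting the difference of two such derivatives as
`⟪u(x), Dg(x) - Dg(y)⟫ + ⟪u(x) - u(y), Dg(y)⟫` bounds it by `L + (2/ε) M · M` times `‖x - y‖`,
where `g_j` is `M`-Lipschitz by the mean value theorem; summing over `j` gives the factor `m`.
-/

section NormedGroup
variable {F : Type*} [NormedAddCommGroup F]

noncomputable def smoothNorm (ε : ℝ) (v : F) : ℝ := √(‖v‖ ^ 2 + ε ^ 2)

variable (ε : ℝ) (v w : F)

theorem smoothNorm_eq_norm_toLp : smoothNorm ε v = ‖WithLp.toLp 2 (v, ε)‖ := by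
  rw [WithLp.prod_norm_eq_of_L2, smoothNorm, Real.norm_eq_abs, sq_abs]
  rfl

theorem abs_smoothNorm_sub_smoothNorm_le : |smoothNorm ε v - smoothNorm ε w| ≤ ‖v - w‖ := by
  simpa [smoothNorm_eq_norm_toLp, ← WithLp.toLp_sub, WithLp.prod_norm_eq_of_L2]
    using abs_norm_sub_norm_le (WithLp.toLp 2 (v, ε)) (WithLp.toLp 2 (w, ε))

theorem norm_le_smoothNorm : ‖v‖ ≤ smoothNorm ε v :=
  Real.le_sqrt_of_sq_le (le_add_of_nonneg_right (sq_nonneg ε))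

theorem le_smoothNorm : ε ≤ smoothNorm ε v :=
  Real.le_sqrt_of_sq_le (le_add_of_nonneg_left (sq_nonneg ‖v‖))

theorem smoothNorm_pos {ε : ℝ} (hε : 0 < ε) (v : F) : 0 < smoothNorm ε v :=
  hε.trans_le (le_smoothNorm ε v)

end NormedGroup

section InnerProductSpace
variable {E F : Type*} [NormedAddCommGroup E] [NormedSpace ℝ E]
  [NormedAddCommGroup F] [InnerProductSpace ℝ F]

noncomputable def smoothNormalize (ε : ℝ) (v : F) : F := (smoothNorm ε v)⁻¹ • v

theorem norm_smoothNormalize_le_one {ε : ℝ} (hε : 0 < ε) (v : F) :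
    ‖smoothNormalize ε v‖ ≤ 1 := by
  rw [smoothNormalize, norm_smul, norm_inv, Real.norm_of_nonneg (smoothNorm_pos hε v).le,
    inv_mul_le_one₀ (smoothNorm_pos hε v)]
  exact norm_le_smoothNorm ε v

theorem norm_smoothNormalize_sub_le {ε : ℝ} (hε : 0 < ε) (v w : F) :
    ‖smoothNormalize ε v - smoothNormalize ε w‖ ≤ 2 / ε * ‖v - w‖ := by
  set sv := smoothNorm ε v
  set sw := smoothNorm ε w
  have hsv : 0 < sv := smoothNorm_pos hε v
  have hsw : 0 < sw := smoothNorm_pos hε w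
  have hsplit :
      smoothNormalize ε v - smoothNormalize ε w = sv⁻¹ • (v - w) + (sv⁻¹ - sw⁻¹) • w := by
    simp only [smoothNormalize, smul_sub, sub_smul]; abel
  have hfirst : ‖sv⁻¹ • (v - w)‖ ≤ ε⁻¹ * ‖v - w‖ := by
    rw [norm_smul, norm_inv, Real.norm_of_nonneg hsv.le]
    gcongr
    exact le_smoothNorm ε v
  have hsecond : ‖(sv⁻¹ - sw⁻¹) • w‖ ≤ ε⁻¹ * ‖v - w‖ := by
    rw [norm_smul, inv_sub_inv hsv.ne' hsw.ne', norm_div,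
      Real.norm_of_nonneg (mul_pos hsv hsw).le]
    calc ‖sw - sv‖ / (sv * sw) * ‖w‖ ≤ ‖v - w‖ / (sv * sw) * sw := by
          gcongr
          · rw [Real.norm_eq_abs, abs_sub_comm]; exact abs_smoothNorm_sub_smoothNorm_le ε v w
          · exact norm_le_smoothNorm ε w
      _ = sv⁻¹ * ‖v - w‖ := by field_simp
      _ ≤ ε⁻¹ * ‖v - w‖ := by gcongr; exact le_smoothNorm ε v
  calc ‖smoothNormalize ε v - smoothNormalize ε w‖
      ≤ ‖sv⁻¹ • (v - w)‖ + ‖(sv⁻¹ - sw⁻¹) • w‖ := hsplit ▸ norm_add_le _ _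
    _ ≤ ε⁻¹ * ‖v - w‖ + ε⁻¹ * ‖v - w‖ := add_le_add hfirst hsecond
    _ = 2 / ε * ‖v - w‖ := by ring

theorem hasFDerivAt_smoothNorm {ε : ℝ} (hε : 0 < ε) (v : F) :
    HasFDerivAt (smoothNorm ε) (innerSL ℝ (smoothNormalize ε v)) v := by
  have hpos : 0 < ‖v‖ ^ 2 + ε ^ 2 := by positivity
  refine (((hasStrictFDerivAt_norm_sq v).hasFDerivAt.add_const (ε ^ 2)).sqrt
    hpos.ne').congr_fderiv ?_
  ext w
  simp [smoothNormalize, smoothNorm]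
  field_simp

theorem HasFDerivAt.smoothNorm {ε : ℝ} (hε : 0 < ε) {g : E → F} {g' : E →L[ℝ] F} {x : E}
    (hg : HasFDerivAt g g' x) :
    HasFDerivAt (fun x => smoothNorm ε (g x))
      ((innerSL ℝ (smoothNormalize ε (g x))).comp g') x :=
  (hasFDerivAt_smoothNorm hε (g x)).comp x hg

theorem norm_innerSL_comp_sub_innerSL_comp_le (u u' : F) (A B : E →L[ℝ] F) :
    ‖(innerSL ℝ u).comp A - (innerSL ℝ u').comp B‖ ≤ ‖u‖ * ‖A - B‖ + ‖u - u'‖ * ‖B‖ := by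
  have hsplit : (innerSL ℝ u).comp A - (innerSL ℝ u').comp B
      = (innerSL ℝ u).comp (A - B) + (innerSL ℝ (u - u')).comp B := by
    ext v; simp
  rw [hsplit, ← innerSL_apply_norm ℝ u, ← innerSL_apply_norm ℝ (u - u')]
  exact (norm_add_le _ _).trans
    (add_le_add (ContinuousLinearMap.opNorm_comp_le _ _) (ContinuousLinearMap.opNorm_comp_le _ _))

theorem norm_fderiv_smoothNorm_comp_sub_le {ε : ℝ} (hε : 0 < ε) {g : E → F}
    (hg : Differentiable ℝ g) {L M : ℝ}
    (hL : ∀ x y, ‖fderiv ℝ g x - fderiv ℝ g y‖ ≤ L * ‖x - y‖)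
    (hM : ∀ x, ‖fderiv ℝ g x‖ ≤ M) (x y : E) :
    ‖fderiv ℝ (fun x => smoothNorm ε (g x)) x - fderiv ℝ (fun x => smoothNorm ε (g x)) y‖
      ≤ (L + 2 * M ^ 2 / ε) * ‖x - y‖ := by
  have hM0 : 0 ≤ M := (norm_nonneg _).trans (hM x)
  have hg_lip : ‖g x - g y‖ ≤ M * ‖x - y‖ :=
    convex_univ.norm_image_sub_le_of_norm_fderiv_le (fun z _ => hg z) (fun z _ => hM z)
      (Set.mem_univ y) (Set.mem_univ x)
  rw [((hg x).hasFDerivAt.smoothNorm hε).fderiv, ((hg y).hasFDerivAt.smoothNorm hε).fderiv]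
  calc _ ≤ ‖smoothNormalize ε (g x)‖ * ‖fderiv ℝ g x - fderiv ℝ g y‖
          + ‖smoothNormalize ε (g x) - smoothNormalize ε (g y)‖ * ‖fderiv ℝ g y‖ :=
        norm_innerSL_comp_sub_innerSL_comp_le _ _ _ _
    _ ≤ 1 * (L * ‖x - y‖) + 2 / ε * (M * ‖x - y‖) * M := by
        gcongr
        · exact norm_smoothNormalize_le_one hε _
        · exact hL x y
        · exact (norm_smoothNormalize_sub_le hε _ _).trans (by gcongr)
        · exact hM y
    _ = (L + 2 * M ^ 2 / ε) * ‖x - y‖ := by ring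

end InnerProductSpace

theorem norm_gradient_sub_gradient {E : Type*} [NormedAddCommGroup E] [InnerProductSpace ℝ E]
    [CompleteSpace E] (f : E → ℝ) (x y : E) :
    ‖gradient f x - gradient f y‖ = ‖fderiv ℝ f x - fderiv ℝ f y‖ := by
  rw [gradient, gradient, ← map_sub, LinearIsometryEquiv.norm_map]

theorem stmt_4 (n d m : ℕ)
    (g : Fin m → EuclideanSpace ℝ (Fin n) → EuclideanSpace ℝ (Fin d))
    (L M ε : ℝ) (hε : 0 < ε)
    (hg : ∀ j, Differentiable ℝ (g j))
    (hL : ∀ j, ∀ x y, ‖fderiv ℝ (g j) x - fderiv ℝ (g j) y‖ ≤ L * ‖x - y‖)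
    (hM : ∀ j x, ‖fderiv ℝ (g j) x‖ ≤ M)
    (r : EuclideanSpace ℝ (Fin n) → ℝ)
    (hr : ∀ x, r x = ∑ j, (Real.sqrt (‖g j x‖ ^ 2 + ε ^ 2) - ε)) :
    ∀ x y, ‖gradient r x - gradient r y‖ ≤ m * (L + 2 * M ^ 2 / ε) * ‖x - y‖ := by
  have hr_eq : r = fun x => ∑ j, (smoothNorm ε (g j x) - ε) := funext hr
  have hfderiv : ∀ x, fderiv ℝ r x = ∑ j, fderiv ℝ (fun x => smoothNorm ε (g j x)) x := by
    intro x
    rw [hr_eq, fderiv_fun_sum fun j _ =>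
      ((hg j x).hasFDerivAt.smoothNorm hε).differentiableAt.sub_const ε]
    simp only [fderiv_sub_const]
  intro x y
  rw [norm_gradient_sub_gradient, hfderiv, hfderiv, ← Finset.sum_sub_distrib]
  calc _ ≤ ∑ _j : Fin m, (L + 2 * M ^ 2 / ε) * ‖x - y‖ :=
        norm_sum_le_of_le _ fun j _ =>
          norm_fderiv_smoothNorm_comp_sub_le hε (hg j) (hL j) (hM j) x y
    _ = m * (L + 2 * M ^ 2 / ε) * ‖x - y‖ := by simp [mul_assoc]
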